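/- The quotient of the set of 1-formulas of L_□ by the relation of S5[Con,Ground]-provable equivalence has exactly 1024 elements. -/

import Mathlib

namespace KripkeModal

/-- Formulas of the modal language `L_□`: atoms `T(x)`, `F(x)` for variables
`x : ℕ`, negation, conjunction, and box. -/
inductive Fml : Type
  | tt : ℕ → Fml   -- T(x)
  | ff : ℕ → Fml   -- F(x)
  | neg : Fml → Fml
  | and : Fml → Fml → Fml
  | box : Fml → Fml
deriving DecidableEq

namespace Fml

/-- Material implication, defined from `¬, ∧`. -/
def imp (φ ψ : Fml) : Fml := neg (and φ (neg ψ))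

/-- Disjunction, defined from `¬, ∧`. -/
def or (φ ψ : Fml) : Fml := neg (and (neg φ) (neg ψ))

/-- Biconditional. -/
def iff (φ ψ : Fml) : Fml := and (imp φ ψ) (imp ψ φ)

/-- Diamond: `◇φ := ¬□¬φ`. -/
def dia (φ : Fml) : Fml := neg (box (neg φ))

/-- `N(x) := ¬T(x) ∧ ¬F(x)`. -/
def Nf (x : ℕ) : Fml := and (neg (tt x)) (neg (ff x))

/-- A fixed contradiction. -/
def bot : Fml := and (tt 0) (neg (tt 0))

end Fml

open Fml

/-- Evaluate a formula propositionally under a valuation `v` of the "atoms":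
the atomic formulas `T(x)`, `F(x)` and all boxed formulas are treated as
propositional atoms. -/
def evalProp (v : Fml → Bool) : Fml → Bool
  | Fml.neg φ => !(evalProp v φ)
  | Fml.and φ ψ => evalProp v φ && evalProp v ψ
  | φ => v φ

/-- A formula is a substitution instance of a classical propositional tautology
iff it evaluates to true under every propositional valuation of its atoms. -/
def Tautology (φ : Fml) : Prop := ∀ v : Fml → Bool, evalProp v φ = true

/-- Provability in the modal system `S5[Ax]`: the smallest set of formulas
containing all substitution instances of propositional tautologies, all
instances of K, T and 5, all formulas in `Ax`, closed under modus ponens and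
necessitation.  Taking `Ax = ∅` gives `S5` itself. -/
inductive Prv (Ax : Set Fml) : Fml → Prop
  | taut {φ} : Tautology φ → Prv Ax φ
  | axK (A B : Fml) : Prv Ax (imp (box (imp A B)) (imp (box A) (box B)))
  | axT (A : Fml) : Prv Ax (imp (box A) A)
  | ax5 (A : Fml) : Prv Ax (imp (dia A) (box (dia A)))
  | axm {φ} : φ ∈ Ax → Prv Ax φ
  | mp {A B} : Prv Ax (imp A B) → Prv Ax A → Prv Ax B
  | nec {A} : Prv Ax A → Prv Ax (box A)

/-- A system is consistent if it does not prove a contradiction. -/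
def Consistent (Ax : Set Fml) : Prop := ¬ Prv Ax Fml.bot

/-- The axiom schema `Con`: `¬(T(x) ∧ F(x))`. -/
def ConAx : Set Fml := { φ | ∃ x : ℕ, φ = neg (and (tt x) (ff x)) }

/-- The axiom schema `Ground`: `(◇T(x) ∧ ◇F(x)) → ◇N(x)`. -/
def GroundAx : Set Fml :=
  { φ | ∃ x : ℕ, φ = imp (and (dia (tt x)) (dia (ff x))) (dia (Nf x)) }

/-- Conjunction of a list of formulas (empty conjunction is `¬⊥`). -/
def bigAnd : List Fml → Fml
  | [] => Fml.neg Fml.bot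
  | [φ] => φ
  | φ :: ψ :: rest => Fml.and φ (bigAnd (ψ :: rest))

/-- Disjunction of a list of formulas (the empty disjunction is the fixed
contradiction `⊥`). -/
def bigOr : List Fml → Fml
  | [] => Fml.bot
  | [φ] => φ
  | φ :: ψ :: rest => Fml.or φ (bigOr (ψ :: rest))

/-- The axiom schema `Min_n`: all instances
`(◇N(x_1) ∧ … ∧ ◇N(x_n)) → ◇(N(x_1) ∧ … ∧ N(x_n))` obtained by substituting
arbitrary (not necessarily distinct) variables for `x_1, …, x_n`. -/
def MinAx (n : ℕ) : Set Fml :=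
  { φ | ∃ l : List ℕ, l.length = n ∧
      φ = imp (bigAnd (l.map (fun x => dia (Nf x)))) (dia (bigAnd (l.map Nf))) }

/-- A formula is extensional if it contains no `□`. -/
def Extensional : Fml → Prop
  | tt _ => True
  | ff _ => True
  | Fml.neg φ => Extensional φ
  | Fml.and φ ψ => Extensional φ ∧ Extensional ψ
  | box _ => False

/-- A formula is intensional if every atomic subformula occurs within the
scope of a `□`. -/
def Intensional : Fml → Prop
  | tt _ => False
  | ff _ => False
  | Fml.neg φ => Intensional φ
  | Fml.and φ ψ => Intensional φ ∧ Intensional ψ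
  | box _ => True

/-- The set of variables occurring in a formula. -/
def vars : Fml → Set ℕ
  | tt x => {x}
  | ff x => {x}
  | Fml.neg φ => vars φ
  | Fml.and φ ψ => vars φ ∪ vars ψ
  | box φ => vars φ

/-- An `n`-formula: one whose atoms use only the variables `x_1, …, x_n`. -/
def IsNFormula (n : ℕ) (φ : Fml) : Prop := vars φ ⊆ {x | 1 ≤ x ∧ x ≤ n}

/-- A 1-formula: one whose atoms use only the single variable `x_1`. -/
abbrev Is1Formula (φ : Fml) : Prop := IsNFormula 1 φ

/-- `φ` is `Γ`-maximal for the system `S5[Ax]`. -/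
def GammaMaximal (Ax : Set Fml) (Γ : Set Fml) (φ : Fml) : Prop :=
  Consistent (Ax ∪ {φ}) ∧ φ ∈ Γ ∧
    ∀ ψ ∈ Γ, Prv Ax (imp φ ψ) ∨ Prv Ax (imp φ (neg ψ))

/-- Extensional `n`-isolators for `S5[Ax]`. -/
def ExtIsolator (n : ℕ) (Ax : Set Fml) (φ : Fml) : Prop :=
  GammaMaximal Ax {ψ | Extensional ψ ∧ IsNFormula n ψ} φ

/-- Intensional `n`-isolators for `S5[Ax]`. -/
def IntIsolator (n : ℕ) (Ax : Set Fml) (φ : Fml) : Prop :=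
  GammaMaximal Ax {ψ | Intensional ψ ∧ IsNFormula n ψ} φ

/-- An `n`-isolator for `S5[Ax]`: a consistent conjunction `ε ∧ ι` of an
extensional `n`-isolator and an intensional `n`-isolator. -/
def Isolator (n : ℕ) (Ax : Set Fml) (φ : Fml) : Prop :=
  ∃ ε ι, ExtIsolator n Ax ε ∧ IntIsolator n Ax ι ∧
    φ = Fml.and ε ι ∧ Consistent (Ax ∪ {φ})

/-- Satisfaction in a model `(W, V)` (with `V = (V1, V2)`) at a world `w`. -/
def Sat {W : Type*} (V1 V2 : ℕ → Set W) : W → Fml → Prop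
  | w, tt x => w ∈ V1 x
  | w, ff x => w ∈ V2 x
  | w, Fml.neg φ => ¬ Sat V1 V2 w φ
  | w, Fml.and φ ψ => Sat V1 V2 w φ ∧ Sat V1 V2 w ψ
  | _, box φ => ∀ v, Sat V1 V2 v φ

/-- The variable assignment satisfies the `Con` constraint. -/
def ConC {W : Type*} (V1 V2 : ℕ → Set W) : Prop := ∀ x, V1 x ∩ V2 x = ∅

/-- The variable assignment satisfies the `Ground` constraint. -/
def GroundC {W : Type*} (V1 V2 : ℕ → Set W) : Prop :=
  ∀ x, (V1 x).Nonempty → (V2 x).Nonempty → ((V1 x ∪ V2 x)ᶜ : Set W).Nonempty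

/-- The variable assignment satisfies the `Min` constraint. -/
def MinC {W : Type*} (V1 V2 : ℕ → Set W) : Prop :=
  ∀ l : List ℕ, l ≠ [] → (∀ x ∈ l, ((V1 x ∪ V2 x)ᶜ : Set W).Nonempty) →
    (⋂ x ∈ l, ((V1 x ∪ V2 x)ᶜ : Set W)).Nonempty

/-- The prime conditions for a subset `S` of the tensor `[3]^n`, realized as
`Fin n → Fin 3` where the value `0` stands for the layer `T`, `1` for `F`,
and `2` for `N` (i.e. `1, 2, 3` in the paper's numbering). -/
def PrimeConditions (n : ℕ) (S : Set (Fin n → Fin 3)) : Prop :=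
  S.Nonempty ∧
  (∀ j : Fin n, (S ∩ {a | a j = 0}).Nonempty → (S ∩ {a | a j = 1}).Nonempty →
      (S ∩ {a | a j = 2}).Nonempty) ∧
  ∀ J : Set (Fin n), J.Nonempty →
    (∀ j ∈ J, (S ∩ {a | a j = 2}).Nonempty) →
    (S ∩ ⋂ j ∈ J, {a | a j = 2}).Nonempty

/-- `χ_1 = T`, `χ_2 = F`, `χ_3 = N` (with `Fin 3` values `0, 1, 2`). -/
def chi (k : Fin 3) (x : ℕ) : Fml :=
  if k = 0 then tt x else if k = 1 then ff x else Nf x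

/-- The extensional `n`-isolator `φ_a = χ_{a_1}(x_1) ∧ … ∧ χ_{a_n}(x_n)`
associated with a tuple `a ∈ [3]^n`. -/
def tupleFml {n : ℕ} (a : Fin n → Fin 3) : Fml :=
  bigAnd ((List.finRange n).map (fun i => chi (a i) (i.1 + 1)))

open Classical in
/-- The pre-`n`-isolator of `S ⊆ [3]^n`:
`⋀_{a ∈ S} ◇φ_a ∧ ⋀_{a ∉ S} ¬◇φ_a`. -/
noncomputable def preIsolator (n : ℕ) (S : Set (Fin n → Fin 3)) : Fml :=
  bigAnd (((Finset.univ : Finset (Fin n → Fin 3)).toList).map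
    (fun a => if a ∈ S then dia (tupleFml a) else Fml.neg (dia (tupleFml a))))

/-! Under `Con`, a world of a one-variable model has one of three types, `T(x₁)`, `F(x₁)` or
`N(x₁)`, and the truth of a 1-formula only depends on the current type and on which types are
realized; `Ground` forbids realizing `T` and `F` without `N`, which leaves six sets of realized
types and ten pointed models. The characteristic formula `χ_w(x₁) ∧ ±◇T(x₁) ∧ ±◇F(x₁) ∧ ±◇N(x₁)`
of a pointed model provably decides every 1-formula (induction on the formula, using that the
`◇`-part is box-stable in S5), and the ten characteristic formulas are provably exhaustive.
Hence two 1-formulas are provably equivalent iff they agree on the ten pointed models, and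
disjunctions of characteristic formulas realize each of the `2 ^ 10` truth profiles. -/

section Propositional

variable {Ax : Set Fml}

@[simp] lemma evalProp_neg (v : Fml → Bool) (φ : Fml) :
    evalProp v (Fml.neg φ) = !evalProp v φ := rfl

@[simp] lemma evalProp_and (v : Fml → Bool) (φ ψ : Fml) :
    evalProp v (Fml.and φ ψ) = (evalProp v φ && evalProp v ψ) := rfl

lemma Prv.taut_mp {A B : Fml} (h : ∀ v, evalProp v A = true → evalProp v B = true)
    (hA : Prv Ax A) : Prv Ax B :=
  Prv.mp (Prv.taut fun v => by simpa [imp, imp_iff_not_or] using h v) hA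

lemma Prv.taut_mp₂ {A B C : Fml}
    (h : ∀ v, evalProp v A = true → evalProp v B = true → evalProp v C = true)
    (hA : Prv Ax A) (hB : Prv Ax B) : Prv Ax C :=
  Prv.mp (Prv.mp (Prv.taut fun v => by simp [imp]; grind) hA) hB

lemma Prv.taut_mp₃ {A B C D : Fml}
    (h : ∀ v, evalProp v A = true → evalProp v B = true → evalProp v C = true →
      evalProp v D = true)
    (hA : Prv Ax A) (hB : Prv Ax B) (hC : Prv Ax C) : Prv Ax D :=
  Prv.mp (Prv.mp (Prv.mp (Prv.taut fun v => by simp [imp]; grind) hA) hB) hC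

lemma Prv.imp_trans {A B C : Fml} : Prv Ax (imp A B) → Prv Ax (imp B C) → Prv Ax (imp A C) :=
  Prv.taut_mp₂ fun v => by simp [imp]; grind

lemma Prv.imp_and {A B C : Fml} :
    Prv Ax (imp A B) → Prv Ax (imp A C) → Prv Ax (imp A (Fml.and B C)) :=
  Prv.taut_mp₂ fun v => by simp [imp]; grind

lemma Prv.and_intro {A B : Fml} : Prv Ax A → Prv Ax B → Prv Ax (Fml.and A B) :=
  Prv.taut_mp₂ fun v => by simp; grind

lemma Prv.bigOr_imp {C : Fml} : ∀ {l : List Fml}, (∀ A ∈ l, Prv Ax (imp A C)) →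
    Prv Ax (imp (bigOr l) C)
  | [], _ => Prv.taut fun v => by simp [bigOr, Fml.bot, imp]
  | [A], h => h A (by simp)
  | A :: B :: l, h => by
      have hA := h A (by simp)
      have hl := Prv.bigOr_imp (l := B :: l) fun A hA => h A (by simp [hA])
      exact Prv.taut_mp₂ (fun v => by simp [bigOr, Fml.or, imp]; grind) hA hl

end Propositional

section S5

variable {Ax : Set Fml}

lemma Prv.box_mono {A B : Fml} (h : Prv Ax (imp A B)) : Prv Ax (imp (box A) (box B)) :=
  Prv.mp (Prv.axK A B) (Prv.nec h)

lemma Prv.dia_mono {A B : Fml} (h : Prv Ax (imp A B)) : Prv Ax (imp (dia A) (dia B)) :=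
  Prv.taut_mp (fun v => by simp [imp, dia]; grind)
    (Prv.box_mono (Ax := Ax) (A := Fml.neg B) (B := Fml.neg A)
      (Prv.taut_mp (fun v => by simp [imp]; grind) h))

lemma Prv.box_imp_box_neg_neg {A : Fml} : Prv Ax (imp (box A) (box (Fml.neg (Fml.neg A)))) :=
  Prv.box_mono (Prv.taut fun v => by simp [imp])

lemma Prv.imp_dia (A : Fml) : Prv Ax (imp A (dia A)) :=
  Prv.taut_mp (fun v => by simp [imp, dia]; grind) (Prv.axT (Fml.neg A))

lemma Prv.dia_neg_imp_not_box (A : Fml) : Prv Ax (imp (dia (Fml.neg A)) (Fml.neg (box A))) :=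
  Prv.taut_mp (fun v => by simp [imp, dia]; grind) (Prv.box_imp_box_neg_neg (Ax := Ax) (A := A))

/-- The dual of axiom 5, obtained from its instance at `¬A`. -/
lemma Prv.dia_box_imp_box (A : Fml) : Prv Ax (imp (dia (box A)) (box A)) := by
  have h5 : Prv Ax (imp (dia (Fml.neg A)) (box (dia (Fml.neg A)))) := Prv.ax5 (Fml.neg A)
  have hdn : Prv Ax (imp (box A) (box (Fml.neg (Fml.neg A)))) := Prv.box_imp_box_neg_neg
  have hbox : Prv Ax (imp (box (dia (Fml.neg A))) (box (Fml.neg (box A)))) :=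
    Prv.box_mono (Prv.taut_mp (fun v => by simp [imp, dia]; grind) hdn)
  have hdn' : Prv Ax (imp (box (Fml.neg (Fml.neg A))) (box A)) :=
    Prv.box_mono (Prv.taut fun v => by simp [imp])
  exact Prv.taut_mp₂ (fun v => by simp [imp, dia]; grind) (Prv.imp_trans h5 hbox) hdn'

lemma Prv.box_imp_box_box (A : Fml) : Prv Ax (imp (box A) (box (box A))) :=
  Prv.imp_trans (Prv.imp_dia _) (Prv.imp_trans (Prv.ax5 _) (Prv.box_mono (Prv.dia_box_imp_box A)))

def BoxStable (Ax : Set Fml) (A : Fml) : Prop := Prv Ax (imp A (box A))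

lemma boxStable_dia (A : Fml) : BoxStable Ax (dia A) := Prv.ax5 A

lemma boxStable_neg_dia (A : Fml) : BoxStable Ax (Fml.neg (dia A)) := by
  have h4 : Prv Ax (imp (box (Fml.neg A)) (box (box (Fml.neg A)))) := Prv.box_imp_box_box _
  have hdn : Prv Ax (imp (box (box (Fml.neg A))) (box (Fml.neg (dia A)))) :=
    Prv.box_mono (Prv.taut fun v => by simp [imp, dia])
  exact Prv.imp_trans (Prv.taut fun v => by simp [imp, dia]) (Prv.imp_trans h4 hdn)

lemma BoxStable.and {A B : Fml} (hA : BoxStable Ax A) (hB : BoxStable Ax B) :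
    BoxStable Ax (Fml.and A B) := by
  have hbox : Prv Ax (imp (box A) (imp (box B) (box (Fml.and A B)))) :=
    Prv.imp_trans (Prv.box_mono (Prv.taut fun v => by simp [imp]; grind)) (Prv.axK _ _)
  have hA' : Prv Ax (imp A (imp (box B) (box (Fml.and A B)))) := Prv.imp_trans hA hbox
  exact Prv.taut_mp₂ (fun v => by simp [imp]; grind) hA' hB

lemma BoxStable.imp_box {A B : Fml} (hA : BoxStable Ax A) (h : Prv Ax (imp A B)) :
    Prv Ax (imp A (box B)) :=
  Prv.imp_trans hA (Prv.box_mono h)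

lemma BoxStable.and_dia_imp_dia {A B : Fml} (hA : BoxStable Ax A) :
    Prv Ax (imp (Fml.and A (dia B)) (dia (Fml.and B A))) := by
  have hbox : Prv Ax (imp A (imp (box (Fml.neg (Fml.and B A))) (box (Fml.neg B)))) :=
    Prv.imp_trans (hA.imp_box (Prv.taut fun v => by simp [imp]; grind)) (Prv.axK _ _)
  exact Prv.taut_mp (fun v => by simp [imp, dia]; grind) hbox

end S5

section Semantics

/-- Worlds are the three types `0 ↦ T(x₁)`, `1 ↦ F(x₁)`, `2 ↦ N(x₁)`, and `□` ranges over the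
types realized in `S`; variables other than `x₁` are `N` everywhere. -/
def eval (S : Fin 3 → Bool) : Fml → Fin 3 → Bool
  | .tt x, w => decide (x = 1 ∧ w = 0)
  | .ff x, w => decide (x = 1 ∧ w = 1)
  | .neg φ, w => !eval S φ w
  | .and φ ψ, w => eval S φ w && eval S ψ w
  | .box φ, _ => decide (∀ a, S a = true → eval S φ a = true)

def SatisfiesGround (S : Fin 3 → Bool) : Prop := S 0 = true → S 1 = true → S 2 = true

instance (S : Fin 3 → Bool) : Decidable (SatisfiesGround S) :=
  inferInstanceAs (Decidable (_ → _))

variable {S : Fin 3 → Bool}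

@[simp] lemma eval_neg (φ : Fml) (w : Fin 3) : eval S (Fml.neg φ) w = !eval S φ w := rfl

@[simp] lemma eval_and (φ ψ : Fml) (w : Fin 3) :
    eval S (Fml.and φ ψ) w = (eval S φ w && eval S ψ w) := rfl

@[simp] lemma eval_box (φ : Fml) (w : Fin 3) :
    eval S (box φ) w = decide (∀ a, S a = true → eval S φ a = true) := rfl

lemma evalProp_eval (w : Fin 3) : ∀ φ, evalProp (fun ψ => eval S ψ w) φ = eval S φ w
  | .tt _ | .ff _ | .box _ => rfl
  | .neg φ => by simp [evalProp_eval w φ]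
  | .and φ ψ => by simp [evalProp_eval w φ, evalProp_eval w ψ]

theorem eval_eq_true_of_prv {φ : Fml} (h : Prv (ConAx ∪ GroundAx) φ) (hS : SatisfiesGround S)
    {w : Fin 3} (hw : S w = true) : eval S φ w = true := by
  induction h generalizing w with
  | taut h => rw [← evalProp_eval]; exact h _
  | axK A B => simp only [imp, eval_neg, eval_and, eval_box]; grind
  | axT A => simp only [imp, eval_neg, eval_and, eval_box]; grind
  | ax5 A => simp only [imp, dia, eval_neg, eval_and, eval_box]; grind
  | axm hm =>
      rcases hm with ⟨x, rfl⟩ | ⟨x, rfl⟩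
      · simp [eval]; omega
      · simp [eval, imp, dia, Nf, SatisfiesGround] at hS ⊢
        grind
  | mp _ _ ih₁ ih₂ =>
      have := ih₁ hw
      simp only [imp, eval_neg, eval_and] at this
      grind
  | nec _ ih => simpa using fun a ha => ih ha

lemma eval_eq_of_prv_iff {φ ψ : Fml} (h : Prv (ConAx ∪ GroundAx) (Fml.iff φ ψ))
    (hS : SatisfiesGround S) {w : Fin 3} (hw : S w = true) : eval S φ w = eval S ψ w := by
  have := eval_eq_true_of_prv h hS hw
  simp [Fml.iff, imp] at this
  grind

end Semantics

section NormalForm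

def signed (b : Bool) (φ : Fml) : Fml := if b then φ else Fml.neg φ

/-- The pre-isolator of `S` for one variable: `±◇T(x₁) ∧ ±◇F(x₁) ∧ ±◇N(x₁)`. -/
def diaProfile (S : Fin 3 → Bool) : Fml :=
  Fml.and (signed (S 0) (dia (chi 0 1)))
    (Fml.and (signed (S 1) (dia (chi 1 1))) (signed (S 2) (dia (chi 2 1))))

def charFml (S : Fin 3 → Bool) (w : Fin 3) : Fml := Fml.and (chi w 1) (diaProfile S)

variable {Ax : Set Fml} {S : Fin 3 → Bool}

lemma Prv.imp_signed_neg {C φ : Fml} {b : Bool} (h : Prv Ax (imp C (signed b φ))) :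
    Prv Ax (imp C (signed (!b) (Fml.neg φ))) := by
  cases b <;> exact Prv.taut_mp (fun v => by simp [signed, imp]) h

lemma Prv.imp_signed_and {C φ ψ : Fml} {a b : Bool} (hφ : Prv Ax (imp C (signed a φ)))
    (hψ : Prv Ax (imp C (signed b ψ))) : Prv Ax (imp C (signed (a && b) (Fml.and φ ψ))) := by
  cases a <;> cases b <;> exact Prv.taut_mp₂ (fun v => by simp [signed, imp]; grind) hφ hψ

lemma Prv.imp_iff_of_imp_signed {C φ ψ : Fml} {b : Bool}
    (hφ : Prv Ax (imp C (signed b φ))) (hψ : Prv Ax (imp C (signed b ψ))) :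
    Prv Ax (imp C (Fml.iff φ ψ)) := by
  cases b <;> exact Prv.taut_mp₂ (fun v => by simp [signed, Fml.iff, imp]; grind) hφ hψ

lemma boxStable_signed_dia (b : Bool) (A : Fml) : BoxStable Ax (signed b (dia A)) := by
  cases b
  · exact boxStable_neg_dia A
  · exact boxStable_dia A

lemma boxStable_diaProfile (S : Fin 3 → Bool) : BoxStable Ax (diaProfile S) :=
  (boxStable_signed_dia _ _).and ((boxStable_signed_dia _ _).and (boxStable_signed_dia _ _))

lemma prv_diaProfile_imp_signed (S : Fin 3 → Bool) (a : Fin 3) :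
    Prv Ax (imp (diaProfile S) (signed (S a) (dia (chi a 1)))) := by
  fin_cases a <;> exact Prv.taut fun v => by simp [diaProfile, imp]; grind

lemma prv_charFml_imp_diaProfile (S : Fin 3 → Bool) (w : Fin 3) :
    Prv Ax (imp (charFml S w) (diaProfile S)) :=
  Prv.taut fun v => by simp [charFml, imp]; grind

lemma prv_charFml_imp_chi (S : Fin 3 → Bool) (w : Fin 3) :
    Prv Ax (imp (charFml S w) (chi w 1)) :=
  Prv.taut fun v => by simp [charFml, imp]; grind

lemma prv_charFml_imp_of_not_realized {a : Fin 3} (ha : S a = false) (φ : Fml) :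
    Prv Ax (imp (charFml S a) φ) := by
  have h := prv_diaProfile_imp_signed (Ax := Ax) S a
  rw [ha] at h
  exact Prv.taut_mp₂ (fun v => by simp [charFml, signed, imp]; grind) h (Prv.imp_dia (chi a 1))

/-- Every world has one of the three types, and the unrealized types are excluded by the
profile, so whatever follows from every realized `charFml S a` follows from `diaProfile S`. -/
lemma prv_diaProfile_imp_of_forall {φ : Fml}
    (h : ∀ a, S a = true → Prv Ax (imp (charFml S a) φ)) : Prv Ax (imp (diaProfile S) φ) := by
  have h' : ∀ a, Prv Ax (imp (charFml S a) φ) := fun a => by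
    cases ha : S a
    · exact prv_charFml_imp_of_not_realized ha φ
    · exact h a ha
  exact Prv.taut_mp₃ (fun v => by simp [charFml, chi, Nf, imp]; grind) (h' 0) (h' 1) (h' 2)

lemma prv_charFml_imp_box {φ : Fml} (w : Fin 3)
    (h : ∀ a, S a = true → Prv Ax (imp (charFml S a) φ)) :
    Prv Ax (imp (charFml S w) (box φ)) :=
  Prv.imp_trans (prv_charFml_imp_diaProfile S w)
    ((boxStable_diaProfile S).imp_box (prv_diaProfile_imp_of_forall h))

lemma prv_charFml_imp_not_box {φ : Fml} (w : Fin 3) {a : Fin 3} (ha : S a = true)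
    (h : Prv Ax (imp (charFml S a) (Fml.neg φ))) :
    Prv Ax (imp (charFml S w) (Fml.neg (box φ))) := by
  have hdia : Prv Ax (imp (charFml S w) (Fml.and (diaProfile S) (dia (chi a 1)))) := by
    have h := prv_diaProfile_imp_signed (Ax := Ax) S a
    rw [ha] at h
    exact Prv.imp_and (prv_charFml_imp_diaProfile S w)
      (Prv.imp_trans (prv_charFml_imp_diaProfile S w) h)
  exact Prv.imp_trans hdia (Prv.imp_trans (boxStable_diaProfile S).and_dia_imp_dia
    (Prv.imp_trans (Prv.dia_mono h) (Prv.dia_neg_imp_not_box φ)))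

lemma prv_chi_imp_signed_tt (w : Fin 3) :
    Prv (ConAx ∪ GroundAx) (imp (chi w 1) (signed (eval S (tt 1) w) (tt 1))) := by
  have hCon : Prv (ConAx ∪ GroundAx) (Fml.neg (Fml.and (tt 1) (ff 1))) := Prv.axm (.inl ⟨1, rfl⟩)
  fin_cases w <;> exact Prv.taut_mp (fun v => by simp [chi, Nf, eval, signed, imp] <;> grind) hCon

lemma prv_chi_imp_signed_ff (w : Fin 3) :
    Prv (ConAx ∪ GroundAx) (imp (chi w 1) (signed (eval S (ff 1) w) (ff 1))) := by
  have hCon : Prv (ConAx ∪ GroundAx) (Fml.neg (Fml.and (tt 1) (ff 1))) := Prv.axm (.inl ⟨1, rfl⟩)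
  fin_cases w <;> exact Prv.taut_mp (fun v => by simp [chi, Nf, eval, signed, imp] <;> grind) hCon

lemma eq_one_of_mem_vars {φ : Fml} (hφ : Is1Formula φ) {x : ℕ} (hx : x ∈ vars φ) : x = 1 :=
  le_antisymm (hφ hx).2 (hφ hx).1

theorem prv_charFml_imp_signed_eval {φ : Fml} (hφ : Is1Formula φ) {w : Fin 3}
    (hw : S w = true) :
    Prv (ConAx ∪ GroundAx) (imp (charFml S w) (signed (eval S φ w) φ)) := by
  induction φ generalizing w with
  | tt x =>
      obtain rfl := eq_one_of_mem_vars hφ (Set.mem_singleton x)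
      exact Prv.imp_trans (prv_charFml_imp_chi S w) (prv_chi_imp_signed_tt w)
  | ff x =>
      obtain rfl := eq_one_of_mem_vars hφ (Set.mem_singleton x)
      exact Prv.imp_trans (prv_charFml_imp_chi S w) (prv_chi_imp_signed_ff w)
  | neg φ ih => exact (ih hφ hw).imp_signed_neg
  | and φ ψ ihφ ihψ =>
      obtain ⟨hφ, hψ⟩ := Set.union_subset_iff.mp hφ
      exact (ihφ hφ hw).imp_signed_and (ihψ hψ hw)
  | box φ ih =>
      by_cases hall : ∀ a, S a = true → eval S φ a = true
      · have hbox : eval S (box φ) w = true := by simpa using hall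
        rw [hbox]
        refine prv_charFml_imp_box w fun a ha => ?_
        simpa [hall a ha, signed] using ih hφ ha
      · have hbox : eval S (box φ) w = false := by simpa using hall
        push Not at hall
        obtain ⟨a, ha, hφa⟩ := hall
        rw [hbox]
        refine prv_charFml_imp_not_box w ha ?_
        simpa [hφa, signed] using ih hφ ha

end NormalForm

section Completeness

/-- The ten pointed models `(realized i, world i)`: all `(S, w)` with `S` satisfying `Ground`
and `w` realized in `S`. -/
def realized : Fin 10 → Fin 3 → Bool :=
  ![![true, false, false], ![false, true, false], ![false, false, true],
    ![true, false, true], ![true, false, true], ![false, true, true], ![false, true, true],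
    ![true, true, true], ![true, true, true], ![true, true, true]]

def world : Fin 10 → Fin 3 := ![0, 1, 2, 0, 2, 1, 2, 0, 1, 2]

lemma satisfiesGround_realized (i : Fin 10) : SatisfiesGround (realized i) := by
  revert i; decide

lemma realized_world (i : Fin 10) : realized i (world i) = true := by
  revert i; decide

def charFmls : List Fml := List.ofFn fun i : Fin 10 => charFml (realized i) (world i)

/-- Propositionally, in the atoms `T(x₁)`, `F(x₁)`, `□¬T(x₁)`, `□¬F(x₁)`, `□¬N(x₁)`, the
disjunction of the ten characteristic formulas follows from `Con`, `Ground` and the instances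
`χ → ◇χ` of `T`. -/
lemma prv_bigOr_charFmls : Prv (ConAx ∪ GroundAx) (bigOr charFmls) := by
  have hCon : Prv (ConAx ∪ GroundAx) (Fml.neg (Fml.and (tt 1) (ff 1))) := Prv.axm (.inl ⟨1, rfl⟩)
  have hGround : Prv (ConAx ∪ GroundAx)
      (imp (Fml.and (dia (tt 1)) (dia (ff 1))) (dia (Nf 1))) := Prv.axm (.inr ⟨1, rfl⟩)
  have hT : Prv (ConAx ∪ GroundAx) (Fml.and (imp (chi 0 1) (dia (chi 0 1)))
      (Fml.and (imp (chi 1 1) (dia (chi 1 1))) (imp (chi 2 1) (dia (chi 2 1))))) :=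
    Prv.and_intro (Prv.imp_dia _) (Prv.and_intro (Prv.imp_dia _) (Prv.imp_dia _))
  refine Prv.taut_mp₃ (fun v => ?_) hCon hGround hT
  simp [charFmls, List.ofFn_succ, bigOr, Fml.or, charFml, diaProfile, signed, chi, Nf,
    dia, imp, realized, world]
  grind

def profile (φ : Fml) : Fin 10 → Bool := fun i => eval (realized i) φ (world i)

lemma profile_eq_of_prv_iff {φ ψ : Fml} (h : Prv (ConAx ∪ GroundAx) (Fml.iff φ ψ)) :
    profile φ = profile ψ :=
  funext fun i => eval_eq_of_prv_iff h (satisfiesGround_realized i) (realized_world i)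

theorem prv_iff_of_profile_eq {φ ψ : Fml} (hφ : Is1Formula φ) (hψ : Is1Formula ψ)
    (h : profile φ = profile ψ) : Prv (ConAx ∪ GroundAx) (Fml.iff φ ψ) := by
  refine Prv.mp (Prv.bigOr_imp fun A hA => ?_) prv_bigOr_charFmls
  obtain ⟨i, rfl⟩ := List.mem_ofFn.mp hA
  have hφi := prv_charFml_imp_signed_eval hφ (realized_world i)
  rw [show eval (realized i) φ (world i) = eval (realized i) ψ (world i) from congrFun h i] at hφi
  exact Prv.imp_iff_of_imp_signed hφi (prv_charFml_imp_signed_eval hψ (realized_world i))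

end Completeness

section Realization

@[simp] lemma vars_signed (b : Bool) (φ : Fml) : vars (signed b φ) = vars φ := by
  cases b <;> rfl

lemma is1Formula_charFml (S : Fin 3 → Bool) (w : Fin 3) : Is1Formula (charFml S w) := by
  fin_cases w <;> simp [IsNFormula, charFml, diaProfile, chi, Nf, dia, vars]

lemma is1Formula_bigOr : ∀ {l : List Fml}, l ≠ [] → (∀ A ∈ l, Is1Formula A) →
    Is1Formula (bigOr l)
  | [A], _, h => h A (by simp)
  | A :: B :: l, _, h => Set.union_subset (h A (by simp))
      (is1Formula_bigOr (List.cons_ne_nil B l) fun A hA => h A (by simp [hA]))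

lemma eval_bigOr (S : Fin 3 → Bool) (w : Fin 3) :
    ∀ l : List Fml, eval S (bigOr l) w = l.any (eval S · w)
  | [] => by simp [bigOr, Fml.bot]
  | [A] => by simp [bigOr]
  | A :: B :: l => by simp [bigOr, Fml.or, eval_bigOr S w (B :: l)]

lemma eval_charFml_realized (i j : Fin 10) :
    eval (realized i) (charFml (realized j) (world j)) (world i) = decide (i = j) := by
  revert i j; decide

/-- `T(x₁) ∧ ¬T(x₁)` stands in for the omitted models: `Fml.bot` mentions `x₀`, so it is not
a 1-formula. -/
def realizer (f : Fin 10 → Bool) : Fml :=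
  bigOr ((List.finRange 10).map fun i =>
    if f i then charFml (realized i) (world i) else Fml.and (tt 1) (Fml.neg (tt 1)))

lemma is1Formula_realizer (f : Fin 10 → Bool) : Is1Formula (realizer f) := by
  refine is1Formula_bigOr (by simp) fun A hA => ?_
  obtain ⟨i, -, rfl⟩ := List.mem_map.mp hA
  split_ifs
  · exact is1Formula_charFml _ _
  · simp [IsNFormula, vars]

lemma profile_realizer (f : Fin 10 → Bool) : profile (realizer f) = f := by
  funext i
  have hdisj : ∀ j, eval (realized i) (if f j then charFml (realized j) (world j)
      else Fml.and (tt 1) (Fml.neg (tt 1))) (world i) = (f j && decide (i = j)) := by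
    intro j
    split_ifs with hj <;> simp [hj, eval_charFml_realized, eval]
  simp only [profile, realizer, eval_bigOr, List.any_map, Function.comp_def, hdisj]
  rw [Bool.eq_iff_iff]
  simp [@eq_comm _ i]

end Realization

/-- up to S5[Con,Ground]-provable equivalence there are exactly
`1024` one-variable formulas. -/
theorem count_one_formulas_S5ConGround :
    Nat.card (Quot (fun φ ψ : {f : Fml // Is1Formula f} =>
      Prv (ConAx ∪ GroundAx) (Fml.iff φ.1 ψ.1))) = 1024 := by
  let profileQ : Quot (fun φ ψ : {f : Fml // Is1Formula f} =>
      Prv (ConAx ∪ GroundAx) (Fml.iff φ.1 ψ.1)) → Fin 10 → Bool :=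
    Quot.lift (fun φ => profile φ.1) fun _ _ => profile_eq_of_prv_iff
  have hbij : Function.Bijective profileQ := by
    refine ⟨?_, fun f => ⟨Quot.mk _ ⟨realizer f, is1Formula_realizer f⟩, profile_realizer f⟩⟩
    rintro ⟨φ⟩ ⟨ψ⟩ h
    exact Quot.sound (prv_iff_of_profile_eq φ.2 ψ.2 h)
  rw [Nat.card_eq_of_bijective profileQ hbij]
  simp

end KripkeModal
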